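/- Let I ⊆ ℕ be a recursively enumerable set and let R : ℕ → ℕ → ℕ → Prop be such that for every i, R i is an equivalence relation on ℕ, and the predicate fun t : ℕ × ℕ × ℕ => R t.1 t.2.1 t.2.2 is r.e. (REPred). Then the join ⨆ i ∈ I, (the equivalence relation R i) in the lattice Setoid ℕ is a recursively enumerable equivalence relation: the predicate fun p : ℕ × ℕ => (⨆ i ∈ I, R i) relates p.1 p.2 is r.e. -/

import Mathlib

/-!
The join of the setoids `R i`, `i ∈ I`, is the equivalence closure of their union
`S x y ↔ ∃ i ∈ I, R i x y`, i.e. reachability along `S`-edges in either direction. A path is a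
finite list of edges, so `x` and `y` are related iff there is a list of edges, each in `S` or
its converse, linking `x` to `y`. Every predicate met along the way is built from r.e. ones by
`∧`, `∨`, `∃` and `∀` over the elements of a finite list, and r.e. predicates are closed under
all four: write each as `∃ n, q a n` with `q` primitive recursive (Kleene normal form); for the
bounded `∀`, one common search bound serves the whole list.
-/

/-- A predicate is recursively enumerable (r.e.); `RePred` is Mathlib's name for it. -/
abbrev REPred' {α : Type} [Primcodable α] (p : α → Prop) : Prop := REPred p

open Nat.Partrec (Code)
open Nat.Partrec.Code Primrec Encodable Relation

theorem List.forall_mem_exists_iff_exists_bound {β : Type*} {l : List β} {Q : β → ℕ → Prop} :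
    (∀ b ∈ l, ∃ k, Q b k) ↔ ∃ n, ∀ b ∈ l, ∃ k < n, Q b k := by
  refine ⟨fun h => ?_, fun ⟨n, hn⟩ b hb => (hn b hb).imp fun _ => And.right⟩
  induction l with
  | nil => exact ⟨0, by simp⟩
  | cons a l ih =>
    obtain ⟨k, hk⟩ := h a List.mem_cons_self
    obtain ⟨n, hn⟩ := ih fun b hb => h b (List.mem_cons_of_mem a hb)
    refine ⟨max (k + 1) n, ?_⟩
    simp only [List.mem_cons, forall_eq_or_imp]
    exact ⟨⟨k, by omega, hk⟩, fun b hb => (hn b hb).imp fun j hj => ⟨by omega, hj.2⟩⟩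

/-- `a :: targets = sources ++ [b]` says the edges are consecutive, from `a` to `b`. -/
theorem Relation.reflTransGen_iff_exists_edges {α : Type*} {r : α → α → Prop} {a b : α} :
    ReflTransGen r a b ↔ ∃ l : List (α × α),
      (∀ e ∈ l, r e.1 e.2) ∧ a :: l.map Prod.snd = l.map Prod.fst ++ [b] := by
  constructor
  · intro h
    induction h with
    | refl => exact ⟨[], by simp⟩
    | @tail b c _ hbc ih =>
      obtain ⟨l, hl, hab⟩ := ih
      refine ⟨l ++ [(b, c)], fun e he => ?_, by simp [← List.cons_append, hab]⟩
      rcases List.mem_append.1 he with he | he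
      · exact hl e he
      · rwa [List.mem_singleton.1 he]
  · rintro ⟨l, hl, hab⟩
    induction l generalizing a with
    | nil =>
      obtain rfl : a = b := by simpa using hab
      exact .refl
    | cons e l ih =>
      simp only [List.map_cons, List.cons_append, List.cons.injEq] at hab
      obtain ⟨rfl, hab⟩ := hab
      exact .head (hl e List.mem_cons_self)
        (ih (fun e' he' => hl e' (List.mem_cons_of_mem e he')) hab)

theorem Setoid.biSup_eq_eqvGen {α ι : Type*} (I : Set ι) (s : ι → Setoid α) :
    ⨆ i ∈ I, s i = EqvGen.setoid fun x y => ∃ i ∈ I, s i x y := by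
  rw [← sSup_image, sSup_eq_eqvGen]
  simp

section

variable {α β : Type*} [Primcodable α] [Primcodable β]

theorem REPred.exists_primrecRel {p : α → Prop} (hp : REPred p) :
    ∃ q : α → ℕ → Prop, PrimrecRel q ∧ ∀ a, p a ↔ ∃ n, q a n := by
  obtain ⟨c, hc⟩ := Code.exists_code.1 hp
  -- `q a n`: the program `c` halts on `a` within `n` steps
  refine ⟨fun a n => (evaln n c (encode a)).isSome, ?_, fun a => ?_⟩
  · refine Primrec₂.primrecRel ?_
    exact (option_isSome.comp (primrec_evaln.comp ((snd.pair (const c)).pair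
      (Primrec.encode.comp fst)))).of_eq fun _ => by simp
  · have hdom : p a ↔ (eval c (encode a)).Dom := by
      simp [hc, encodek, Part.assert]
    rw [hdom, Part.dom_iff_mem]
    simp only [evaln_complete, Option.mem_def, Option.isSome_iff_exists]
    exact exists_comm

theorem PrimrecRel.rePred_exists {q : α → ℕ → Prop} (hq : PrimrecRel q) :
    REPred fun a => ∃ n, q a n := by
  classical
  refine (Partrec.rfind hq.decide.to_comp.partrec₂).dom_re.of_eq fun a => ?_
  simp

theorem PrimrecPred.rePred {p : α → Prop} (hp : PrimrecPred p) : REPred p :=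
  hp.computablePred.to_re

theorem REPred.comp {p : β → Prop} (hp : REPred p) {f : α → β} (hf : Computable f) :
    REPred fun a => p (f a) :=
  Partrec.comp hp hf

theorem REPred.and {p q : α → Prop} (hp : REPred p) (hq : REPred q) :
    REPred fun a => p a ∧ q a :=
  (hp.bind (hq.comp Computable.fst).to₂).dom_re.of_eq fun a => by simp [Part.assert]

theorem REPred.or {p q : α → Prop} (hp : REPred p) (hq : REPred q) :
    REPred fun a => p a ∨ q a := by
  obtain ⟨p', hp', hpp'⟩ := hp.exists_primrecRel
  obtain ⟨q', hq', hqq'⟩ := hq.exists_primrecRel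
  have hpq' : PrimrecRel fun a n => p' a n ∨ q' a n := hp'.or hq'
  exact hpq'.rePred_exists.of_eq fun a => by simp [hpp', hqq', exists_or]

theorem REPred.exists {p : α × β → Prop} (hp : REPred p) : REPred fun a => ∃ b, p (a, b) := by
  obtain ⟨q, hq, hpq⟩ := hp.exists_primrecRel
  -- `n` codes a candidate witness `b` together with a step count for `p (a, b)`
  have hq' : PrimrecRel fun (a : α) (n : ℕ) =>
      ∃ b ∈ (decode n.unpair.1 : Option β).toList, q (a, b) n.unpair.2 :=
    (PrimrecRel.exists_mem_list (R := fun (b : β) (y : α × ℕ) => q (y.1, b) y.2.unpair.2)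
      (hq.comp ((fst.comp snd).pair fst) (snd.comp (unpair.comp (snd.comp snd))))).comp
      (optionToList.comp (Primrec.decode.comp (fst.comp (unpair.comp snd)))) Primrec.id
  refine hq'.rePred_exists.of_eq fun a => ⟨?_, ?_⟩
  · rintro ⟨n, b, hb, hqb⟩
    exact ⟨b, (hpq _).2 ⟨_, hqb⟩⟩
  · rintro ⟨b, hb⟩
    obtain ⟨k, hk⟩ := (hpq _).1 hb
    exact ⟨Nat.pair (encode b) k, b, by simp, by simpa using hk⟩

theorem REPred.forall_mem_list {p : α × β → Prop} (hp : REPred p) :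
    REPred fun x : α × List β => ∀ b ∈ x.2, p (x.1, b) := by
  obtain ⟨q, hq, hpq⟩ := hp.exists_primrecRel
  have hbounded : PrimrecRel fun (b : β) (y : (α × List β) × ℕ) =>
      ∃ k ∈ List.range y.2, q (y.1.1, b) k :=
    (PrimrecRel.exists_mem_list (R := fun (k : ℕ) (z : β × ((α × List β) × ℕ)) =>
        q (z.2.1.1, z.1) k)
      (hq.comp ((fst.comp (fst.comp (snd.comp snd))).pair (fst.comp snd)) fst)).comp
      (list_range.comp (snd.comp snd)) Primrec.id
  have hq' : PrimrecRel fun (x : α × List β) (n : ℕ) =>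
      ∀ b ∈ x.2, ∃ k ∈ List.range n, q (x.1, b) k :=
    (PrimrecRel.forall_mem_list hbounded).comp (snd.comp fst) Primrec.id
  refine hq'.rePred_exists.of_eq fun x => ?_
  simp only [List.mem_range, hpq]
  exact List.forall_mem_exists_iff_exists_bound.symm

theorem REPred.reflTransGen {r : α → α → Prop} (hr : REPred fun x : α × α => r x.1 x.2) :
    REPred fun x : α × α => ReflTransGen r x.1 x.2 := by
  have hedges : REPred fun y : (α × α) × List (α × α) => ∀ e ∈ y.2, r e.1 e.2 :=
    (hr.comp Computable.snd).forall_mem_list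
  have hlinked : PrimrecPred fun y : (α × α) × List (α × α) =>
      y.1.1 :: y.2.map Prod.snd = y.2.map Prod.fst ++ [y.1.2] :=
    Primrec.eq.comp (list_cons.comp (fst.comp fst) (list_map snd (snd.comp snd).to₂))
      (list_append.comp (list_map snd (fst.comp snd).to₂)
        (list_cons.comp (snd.comp fst) (const [])))
  exact (hedges.and hlinked.rePred).exists.of_eq fun x =>
    (reflTransGen_iff_exists_edges (r := r) (a := x.1) (b := x.2)).symm

theorem REPred.eqvGen {r : α → α → Prop} (hr : REPred fun x : α × α => r x.1 x.2) :
    REPred fun x : α × α => EqvGen r x.1 x.2 := by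
  have hsymm : REPred fun x : α × α => SymmGen r x.1 x.2 :=
    hr.or (hr.comp (Computable.snd.pair Computable.fst))
  exact hsymm.reflTransGen.of_eq fun x => by rw [EqvGen.reflTransGen_symmGen]

end

/-- The join, in the lattice `Setoid ℕ`, of a recursively enumerable set of
(uniformly) recursively enumerable equivalence relations is a recursively
enumerable equivalence relation. -/
theorem re_iSup_of_re_family (I : Set ℕ) (hI : REPred' fun i => i ∈ I)
    (R : ℕ → ℕ → ℕ → Prop) (hR : ∀ i, Equivalence (R i))
    (hRe : REPred' fun t : ℕ × ℕ × ℕ => R t.1 t.2.1 t.2.2) :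
    REPred' fun p : ℕ × ℕ =>
      (⨆ i ∈ I, (⟨R i, hR i⟩ : Setoid ℕ)).r p.1 p.2 := by
  have hunion : REPred fun x : ℕ × ℕ => ∃ i ∈ I, R i x.1 x.2 :=
    ((hI.comp Computable.snd).and (hRe.comp (Computable.snd.pair Computable.fst))).exists
  refine (REPred.eqvGen (r := fun x y => ∃ i ∈ I, R i x y) hunion).of_eq fun x => ?_
  rw [Setoid.biSup_eq_eqvGen]
  rfl
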